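/- arXiv:1502.00056 — 2 statements merged into one kernel-verified Lean document; each statement's English description precedes it below -/
import Mathlib

section
/- For every n ≥ 2: (a) lb(w(σ)) ≤ ⌊(n-1)²/4⌋ for every σ ∈ Π_n(12/3), with equality for at least one σ; and (b) for every k ≥ 1, the number of σ ∈ Π_n(12/3) with lb(w(σ)) = k equals D_k = #{d ≥ 1 : d divides k and d + k/d + 1 ≤ n}. -/
open Finset

/-- `IsRGF w` : `w = a₁⋯aₙ` is a restricted growth function: all letters are
positive, the first letter is `1` and each later letter is at most one more
than the maximum of the preceding prefix. -/
def IsRGF (w : List ℕ) : Prop :=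
  (∀ a ∈ w, 1 ≤ a) ∧
  (0 < w.length → w.getD 0 0 = 1) ∧
  (∀ j : ℕ, j + 1 < w.length →
    w.getD (j + 1) 0 ≤ 1 + (w.take (j + 1)).foldr max 0)

/-- The set partition encoded by the word `w` contains the set-partition
pattern encoded by the word `p`:  there are positions, listed increasingly,
whose "same block" (= same letter) pattern in `w` is exactly that of `p`. -/
def ContainsPat (w p : List ℕ) : Prop :=
  ∃ f : Fin p.length → Fin w.length, StrictMono f ∧
    ∀ a b : Fin p.length, (w.get (f a) = w.get (f b) ↔ p.get a = p.get b)

/-- `Rn n p` : the restricted growth functions of length `n` whose associated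
set partition avoids the pattern (of set partitions) encoded by the RGF `p`.
Via the standard bijection `σ ↦ w(σ)` this is `R_n(π) ≅ Π_n(π)`.
Patterns of `[3]`:  `1/2/3 ↦ [1,2,3]`, `1/23 ↦ [1,2,2]`, `13/2 ↦ [1,2,1]`,
`12/3 ↦ [1,1,2]`, `123 ↦ [1,1,1]`. -/
def Rn (n : ℕ) (p : List ℕ) : Set (List ℕ) :=
  {w | w.length = n ∧ IsRGF w ∧ ¬ ContainsPat w p}

/-- `lb` : sum over positions `j` of the number of distinct values occurring
before position `j` that are bigger than the letter at `j`. -/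
def statLB (w : List ℕ) : ℕ :=
  ∑ j ∈ Finset.range w.length,
    ((w.take j).toFinset.filter (fun v => w.getD j 0 < v)).card

/-- `ls` : left and smaller. -/
def statLS (w : List ℕ) : ℕ :=
  ∑ j ∈ Finset.range w.length,
    ((w.take j).toFinset.filter (fun v => v < w.getD j 0)).card

/-- `rb` : right and bigger. -/
def statRB (w : List ℕ) : ℕ :=
  ∑ j ∈ Finset.range w.length,
    ((w.drop (j + 1)).toFinset.filter (fun v => w.getD j 0 < v)).card

/-- `rs` : right and smaller. -/
def statRS (w : List ℕ) : ℕ :=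
  ∑ j ∈ Finset.range w.length,
    ((w.drop (j + 1)).toFinset.filter (fun v => v < w.getD j 0)).card

/-- The four–variable generating function
`F_n(π;q,r,s,t) = ∑_{σ∈Π_n(π)} q^{lb} r^{ls} s^{rb} t^{rs}`, with
`q = X 0`, `r = X 1`, `s = X 2`, `t = X 3`. -/
noncomputable def Fgen (n : ℕ) (p : List ℕ) : MvPolynomial (Fin 4) ℤ :=
  ∑ᶠ w ∈ Rn n p,
    (MvPolynomial.X 0 : MvPolynomial (Fin 4) ℤ) ^ statLB w *
      MvPolynomial.X 1 ^ statLS w *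
      MvPolynomial.X 2 ^ statRB w *
      MvPolynomial.X 3 ^ statRS w

/-- `LB_n(π;q)`. -/
noncomputable def LBp (n : ℕ) (p : List ℕ) : Polynomial ℤ :=
  ∑ᶠ w ∈ Rn n p, Polynomial.X ^ statLB w

/-- `LS_n(π;q)`. -/
noncomputable def LSp (n : ℕ) (p : List ℕ) : Polynomial ℤ :=
  ∑ᶠ w ∈ Rn n p, Polynomial.X ^ statLS w

/-- `RB_n(π;q)`. -/
noncomputable def RBp (n : ℕ) (p : List ℕ) : Polynomial ℤ :=
  ∑ᶠ w ∈ Rn n p, Polynomial.X ^ statRB w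

/-- `RS_n(π;q)`. -/
noncomputable def RSp (n : ℕ) (p : List ℕ) : Polynomial ℤ :=
  ∑ᶠ w ∈ Rn n p, Polynomial.X ^ statRS w

/-!
Once a letter of a restricted growth function repeats an earlier one, avoiding `12/3` forces
every later letter to equal it; before that, the letters are distinct and hence `1, 2, …, m`.
So the words avoiding `12/3` are exactly `1 2 ⋯ m a ⋯ a` (`e` copies of `a`, `m + e = n`), and
their `lb` is `e (m - a)`. Writing `d = m - a`, the values of `lb` are the products `d e` with
`d + e ≤ n - 1`: by AM–GM they are at most `⌊(n - 1)² / 4⌋`, with equality for the balanced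
choice, and the words with `lb = k ≥ 1` correspond to the divisors `d` of `k` with
`d + k / d + 1 ≤ n`.
-/

lemma IsRGF.getD_eq_succ_of_pairwise_ne {w : List ℕ} (hw : IsRGF w) {m : ℕ}
    (hm : m ≤ w.length) (hne : ∀ i j, i < j → j < m → w.getD i 0 ≠ w.getD j 0) :
    ∀ j < m, w.getD j 0 = j + 1 := by
  intro j
  induction j using Nat.strong_induction_on with
  | _ j ih =>
    intro hj
    rcases j with _ | j
    · exact hw.2.1 (by omega)
    have hmax : (w.take (j + 1)).foldr max 0 ≤ j + 1 := by
      refine List.max_le_of_forall_le _ _ fun x hx => ?_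
      obtain ⟨t, ht, rfl⟩ := List.mem_iff_getElem.mp hx
      rw [List.length_take] at ht
      rw [List.getElem_take, ← List.getD_eq_getElem w 0 (by omega), ih t (by omega) (by omega)]
      omega
    have hpos : 1 ≤ w.getD (j + 1) 0 :=
      hw.1 _ (by rw [List.getD_eq_getElem w 0 (by omega)]; exact List.getElem_mem _)
    have hfresh : ∀ i < j + 1, w.getD (j + 1) 0 ≠ i + 1 := fun i hi h =>
      hne i (j + 1) hi hj (by rw [ih i (by omega) (by omega), h])
    have := hw.2.2 j (by omega)
    have := hfresh (w.getD (j + 1) 0 - 1)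
    omega

lemma containsPat_112_iff {w : List ℕ} :
    ContainsPat w [1, 1, 2] ↔ ∃ i j k, i < j ∧ j < k ∧ k < w.length ∧
      w.getD i 0 = w.getD j 0 ∧ w.getD k 0 ≠ w.getD i 0 := by
  constructor
  · rintro ⟨f, hf, hpat⟩
    have h01 := (hpat 0 1).mpr rfl
    have h02 := (hpat 0 2).not.mpr (by decide)
    refine ⟨f 0, f 1, f 2, hf (by decide), hf (by decide), (f 2).2, ?_, Ne.symm ?_⟩ <;>
      simpa [List.getD_eq_getElem?_getD]
  · rintro ⟨i, j, k, hij, hjk, hk, heq, hne⟩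
    refine ⟨![⟨i, by omega⟩, ⟨j, by omega⟩, ⟨k, hk⟩], ?_, ?_⟩
    · intro a b hab
      fin_cases a <;> fin_cases b <;> simp [Fin.lt_def] at hab ⊢ <;> omega
    · rw [List.getD_eq_getElem _ _ (by omega), List.getD_eq_getElem _ _ (by omega)] at heq
      rw [List.getD_eq_getElem _ _ hk, List.getD_eq_getElem _ _ (by omega), heq] at hne
      intro a b
      fin_cases a <;> fin_cases b <;> simp [heq, hne, Ne.symm hne]

def stairWord (m a e : ℕ) : List ℕ := List.range' 1 m ++ List.replicate e a

section stairWord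

variable {m a e j : ℕ}

@[simp]
lemma length_stairWord : (stairWord m a e).length = m + e := by
  simp [stairWord]

lemma getD_stairWord_of_lt (h : j < m) : (stairWord m a e).getD j 0 = j + 1 := by
  rw [stairWord, List.getD_append _ _ _ _ (by simpa using h),
    List.getD_eq_getElem _ _ (by simpa using h), List.getElem_range'_1, add_comm]

lemma getD_stairWord_of_le (h₁ : m ≤ j) (h₂ : j < m + e) : (stairWord m a e).getD j 0 = a := by
  rw [stairWord, List.getD_append_right _ _ _ _ (by simpa using h₁)]
  exact List.getD_replicate _ (by simp; omega)

lemma take_stairWord_of_le (h : j ≤ m) : (stairWord m a e).take j = List.range' 1 j := by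
  simp [stairWord, List.take_append, h, Nat.sub_eq_zero_of_le h]

lemma take_stairWord_of_ge (h : m ≤ j) :
    (stairWord m a e).take j = stairWord m a (min (j - m) e) := by
  simp [stairWord, List.take_append, List.take_of_length_le, h, List.take_replicate]

lemma toFinset_stairWord (h₁ : 1 ≤ a) (h₂ : a ≤ m) : (stairWord m a e).toFinset = Icc 1 m := by
  ext v
  simp only [stairWord, List.toFinset_append, mem_union, List.mem_toFinset, List.mem_range'_1,
    List.mem_replicate, mem_Icc]
  omega

lemma eq_stairWord_of_getD {w : List ℕ} (hlen : w.length = m + e)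
    (hpre : ∀ j < m, w.getD j 0 = j + 1) (hsuf : ∀ j, m ≤ j → j < m + e → w.getD j 0 = a) :
    w = stairWord m a e := by
  refine List.ext_getElem (by simp [hlen]) fun j hj _ => ?_
  rw [← List.getD_eq_getElem _ 0 hj, ← List.getD_eq_getElem _ 0 (by simp; omega)]
  rcases lt_or_ge j m with hjm | hjm
  · rw [hpre j hjm, getD_stairWord_of_lt hjm]
  · rw [hsuf j hjm (by omega), getD_stairWord_of_le hjm (by omega)]

lemma isRGF_stairWord (h₁ : 1 ≤ a) (h₂ : a ≤ m) : IsRGF (stairWord m a e) := by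
  refine ⟨fun v hv => ?_, fun _ => getD_stairWord_of_lt (by omega), fun j hj => ?_⟩
  · have := (toFinset_stairWord (e := e) h₁ h₂ ▸ List.mem_toFinset.mpr hv : v ∈ Icc 1 m)
    exact (mem_Icc.mp this).1
  · rw [length_stairWord] at hj
    rcases lt_or_ge (j + 1) m with hjm | hjm
    · have hmem : j + 1 ∈ (stairWord m a e).take (j + 1) := by
        rw [take_stairWord_of_le hjm.le]
        exact List.mem_range'_1.mpr ⟨by omega, by omega⟩
      have : j + 1 ≤ ((stairWord m a e).take (j + 1)).foldr max 0 := List.le_max_of_le hmem le_rfl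
      rw [getD_stairWord_of_lt hjm]
      omega
    · have hmem : m ∈ (stairWord m a e).take (j + 1) := by
        rw [take_stairWord_of_ge hjm, ← List.mem_toFinset, toFinset_stairWord h₁ h₂]
        exact mem_Icc.mpr ⟨by omega, le_rfl⟩
      have : m ≤ ((stairWord m a e).take (j + 1)).foldr max 0 := List.le_max_of_le hmem le_rfl
      rw [getD_stairWord_of_le hjm (by omega)]
      omega

lemma stairWord_mem_Rn (h₁ : 1 ≤ a) (h₂ : a ≤ m) : stairWord m a e ∈ Rn (m + e) [1, 1, 2] := by
  refine ⟨length_stairWord, isRGF_stairWord h₁ h₂, fun h => ?_⟩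
  obtain ⟨i, j, k, hij, hjk, hk, heq, hne⟩ := containsPat_112_iff.mp h
  rw [length_stairWord] at hk
  rcases lt_or_ge j m with hjm | hjm
  · rw [getD_stairWord_of_lt (by omega), getD_stairWord_of_lt hjm] at heq
    omega
  · rw [getD_stairWord_of_le (by omega) hk, heq, getD_stairWord_of_le hjm (by omega)] at hne
    exact hne rfl

lemma statLB_stairWord (h₁ : 1 ≤ a) (h₂ : a ≤ m) :
    statLB (stairWord m a e) = e * (m - a) := by
  rw [statLB, length_stairWord, sum_range_add]
  have hpre : ∀ j ∈ range m, (((stairWord m a e).take j).toFinset.filter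
      (fun v => (stairWord m a e).getD j 0 < v)).card = 0 := by
    intro j hj
    rw [mem_range] at hj
    rw [getD_stairWord_of_lt hj, take_stairWord_of_le hj.le, List.toFinset_range'_1_1,
      card_eq_zero, filter_eq_empty_iff]
    intro v hv
    rw [mem_Icc] at hv
    omega
  have hsuf : ∀ x ∈ range e, (((stairWord m a e).take (m + x)).toFinset.filter
      (fun v => (stairWord m a e).getD (m + x) 0 < v)).card = m - a := by
    intro x hx
    rw [mem_range] at hx
    rw [getD_stairWord_of_le (by omega) (by omega), take_stairWord_of_ge (by omega),
      toFinset_stairWord h₁ h₂, ← Nat.card_Ioc a m]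
    congr 1
    ext v
    simp only [mem_filter, mem_Icc, mem_Ioc]
    omega
  rw [sum_congr rfl hpre, sum_congr rfl hsuf, sum_const_zero, sum_const, card_range, smul_eq_mul,
    zero_add]

end stairWord

lemma exists_eq_stairWord_of_mem_Rn {n : ℕ} (hn : 1 ≤ n) {w : List ℕ}
    (hw : w ∈ Rn n [1, 1, 2]) : ∃ m a e, m + e = n ∧ 1 ≤ a ∧ a ≤ m ∧ w = stairWord m a e := by
  obtain ⟨hlen, hrgf, havoid⟩ := hw
  by_cases H : ∃ j < n, ∃ i < j, w.getD i 0 = w.getD j 0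
  · obtain ⟨hm, i, him, hrep⟩ := Nat.find_spec H
    set m := Nat.find H
    have hasc := hrgf.getD_eq_succ_of_pairwise_ne (m := m) (by omega)
      fun i' j' h₁ h₂ h => Nat.find_min H h₂ ⟨by omega, i', h₁, h⟩
    have htail : ∀ k, m ≤ k → k < n → w.getD k 0 = i + 1 := by
      intro k h₁ h₂
      rw [← hasc i him, hrep]
      rcases h₁.eq_or_lt with rfl | h₁
      · rfl
      by_contra hne
      exact havoid (containsPat_112_iff.mpr
        ⟨i, m, k, him, h₁, by omega, hrep, fun h => hne (h.trans hrep)⟩)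
    exact ⟨m, i + 1, n - m, by omega, by omega, by omega,
      eq_stairWord_of_getD (by omega) hasc fun k h₁ h₂ => htail k h₁ (by omega)⟩
  · refine ⟨n, 1, 0, by omega, le_rfl, hn, eq_stairWord_of_getD (by omega) ?_ (by omega)⟩
    exact hrgf.getD_eq_succ_of_pairwise_ne hlen.ge fun i j h₁ h₂ h => H ⟨j, h₂, i, h₁, h⟩

lemma Nat.mul_le_sq_div_four {x y t : ℕ} (h : x + y ≤ t) : x * y ≤ t ^ 2 / 4 := by
  have : 4 * (x * y) ≤ t ^ 2 :=
    (mul_assoc 4 x y ▸ four_mul_le_sq_add x y).trans (Nat.pow_le_pow_left h 2)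
  omega

lemma Nat.div_two_mul_sub_div_two (t : ℕ) : t / 2 * (t - t / 2) = t ^ 2 / 4 := by
  rcases Nat.even_or_odd' t with ⟨q, rfl | rfl⟩
  · rw [show 2 * q / 2 = q by omega, show 2 * q - q = q by omega,
      show (2 * q) ^ 2 = 4 * (q * q) by ring]
    omega
  · rw [show (2 * q + 1) / 2 = q by omega, show 2 * q + 1 - q = q + 1 by omega,
      show (2 * q + 1) ^ 2 = 4 * (q * (q + 1)) + 1 by ring]
    omega

lemma statLB_le_of_mem_Rn {n : ℕ} (hn : 1 ≤ n) {w : List ℕ} (hw : w ∈ Rn n [1, 1, 2]) :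
    statLB w ≤ (n - 1) ^ 2 / 4 := by
  obtain ⟨m, a, e, rfl, h₁, h₂, rfl⟩ := exists_eq_stairWord_of_mem_Rn hn hw
  rw [statLB_stairWord h₁ h₂]
  exact Nat.mul_le_sq_div_four (by omega)

lemma exists_mem_Rn_statLB_eq {n : ℕ} (hn : 1 ≤ n) :
    ∃ w ∈ Rn n [1, 1, 2], statLB w = (n - 1) ^ 2 / 4 := by
  have hw := stairWord_mem_Rn (m := n - (n - 1) / 2) (e := (n - 1) / 2) le_rfl (by omega)
  rw [Nat.sub_add_cancel (by omega)] at hw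
  refine ⟨_, hw, ?_⟩
  rw [statLB_stairWord le_rfl (by omega), show n - (n - 1) / 2 - 1 = (n - 1) - (n - 1) / 2 by omega,
    Nat.div_two_mul_sub_div_two]

lemma setOf_mem_Rn_statLB_eq {n k : ℕ} (hn : 1 ≤ n) (hk : 1 ≤ k) :
    {w ∈ Rn n [1, 1, 2] | statLB w = k} =
      (fun d => stairWord (n - k / d) (n - k / d - d) (k / d)) ''
        {d | 1 ≤ d ∧ d ∣ k ∧ d + k / d + 1 ≤ n} := by
  ext w
  constructor
  · rintro ⟨hw, hlb⟩
    obtain ⟨m, a, e, rfl, h₁, h₂, rfl⟩ := exists_eq_stairWord_of_mem_Rn hn hw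
    rw [statLB_stairWord h₁ h₂] at hlb
    subst hlb
    have hd : 0 < m - a := Nat.pos_of_mul_pos_left (a := e) (by omega)
    have hkd : e * (m - a) / (m - a) = e := Nat.mul_div_cancel _ hd
    refine ⟨m - a, ⟨hd, dvd_mul_left _ _, by omega⟩, ?_⟩
    simp only [hkd, show m + e - e = m by omega, show m - (m - a) = a by omega]
  · rintro ⟨d, ⟨hd, hdk, hdn⟩, rfl⟩
    have he : 0 < k / d := Nat.div_pos (Nat.le_of_dvd hk hdk) hd
    have hw := stairWord_mem_Rn (m := n - k / d) (a := n - k / d - d) (e := k / d)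
      (by omega) (by omega)
    rw [Nat.sub_add_cancel (by omega)] at hw
    refine ⟨hw, ?_⟩
    rw [statLB_stairWord (by omega) (by omega), show n - k / d - (n - k / d - d) = d by omega,
      Nat.div_mul_cancel hdk]

lemma injOn_stairWord_divisor {n k : ℕ} (hk : 1 ≤ k) :
    Set.InjOn (fun d => stairWord (n - k / d) (n - k / d - d) (k / d))
      {d | 1 ≤ d ∧ d ∣ k ∧ d + k / d + 1 ≤ n} := by
  rintro d₁ ⟨hd₁, hdk₁, hn₁⟩ d₂ ⟨hd₂, hdk₂, hn₂⟩ h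
  -- the word's alphabet `{1, …, n - k / d}` recovers `k / d`, hence `d`
  have halph : #(Icc 1 (n - k / d₁)) = #(Icc 1 (n - k / d₂)) := by
    rw [← toFinset_stairWord (a := n - k / d₁ - d₁) (e := k / d₁) (by omega) (by omega),
      ← toFinset_stairWord (a := n - k / d₂ - d₂) (e := k / d₂) (by omega) (by omega)]
    exact congrArg (fun w => w.toFinset.card) h
  rw [Nat.card_Icc, Nat.card_Icc] at halph
  rw [← Nat.div_div_self hdk₁ (by omega), ← Nat.div_div_self hdk₂ (by omega)]
  congr 1
  omega

/-- for `n ≥ 2`, (a) `lb ≤ ⌊(n-1)²/4⌋` on `Π_n(12/3)` with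
equality attained, and (b) for `k ≥ 1` the number of `σ ∈ Π_n(12/3)` with
`lb(w(σ)) = k` is `D_k = #{d ≥ 1 : d ∣ k, d + k/d + 1 ≤ n}`. -/
theorem stmt14 (n : ℕ) (hn : 2 ≤ n) :
    ((∀ w ∈ Rn n [1, 1, 2], statLB w ≤ (n - 1) ^ 2 / 4) ∧
      (∃ w ∈ Rn n [1, 1, 2], statLB w = (n - 1) ^ 2 / 4)) ∧
    (∀ k : ℕ, 1 ≤ k →
      {w ∈ Rn n [1, 1, 2] | statLB w = k}.ncard =
        {d : ℕ | 1 ≤ d ∧ d ∣ k ∧ d + k / d + 1 ≤ n}.ncard) := by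
  refine ⟨⟨fun w hw => statLB_le_of_mem_Rn (by omega) hw, exists_mem_Rn_statLB_eq (by omega)⟩,
    fun k hk => ?_⟩
  rw [setOf_mem_Rn_statLB_eq (by omega) hk, (injOn_stairWord_divisor hk).ncard_image]
end

section
/- For every n and every k with 1 ≤ k ≤ n-2, one has #{d ≥ 1 : d divides k and d + k/d + 1 ≤ n} = τ(k), the number of positive divisors of k; consequently the number of σ ∈ Π_n(12/3) with lb(w(σ)) = k equals τ(k). -/
open Finset

/-! ### Auxiliary material for `stmt15` -/

private def wrd (m a t : ℕ) : List ℕ :=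
  (List.range m).map Nat.succ ++ List.replicate t a

private lemma wrd_length (m a t : ℕ) : (wrd m a t).length = m + t := by
  simp [wrd]

private lemma wrd_getElem_lt {m a t i : ℕ} (h : i < m) (h' : i < (wrd m a t).length) :
    (wrd m a t)[i] = i + 1 := by
  have hlen : i < ((List.range m).map Nat.succ).length := by simpa using h
  simp only [wrd, List.getElem_append, hlen, dite_true, dif_pos, List.getElem_map,
    List.getElem_range]

private lemma wrd_getElem_ge {m a t i : ℕ} (h : m ≤ i) (h' : i < (wrd m a t).length) :
    (wrd m a t)[i] = a := by
  have hlen : ¬ i < ((List.range m).map Nat.succ).length := by simpa using not_lt.2 h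
  simp only [wrd, List.getElem_append, hlen, dite_false, dif_neg, List.getElem_replicate,
    not_false_iff]

private lemma wrd_take_le {m a t j : ℕ} (h : j ≤ m) :
    (wrd m a t).take j = (List.range j).map Nat.succ := by
  rw [wrd, List.take_append_of_le_length (by simpa using h), ← List.map_take,
    List.take_range, Nat.min_eq_left h]

private lemma mem_range_succ_toFinset {m x : ℕ} :
    x ∈ ((List.range m).map Nat.succ).toFinset ↔ 1 ≤ x ∧ x ≤ m := by
  simp only [List.mem_toFinset, List.mem_map, List.mem_range]
  constructor
  · rintro ⟨i, hi, rfl⟩; omega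
  · rintro ⟨h1, h2⟩; exact ⟨x - 1, by omega, by omega⟩

private lemma wrd_take_toFinset {m a t j : ℕ} (ha : 1 ≤ a) (ham : a ≤ m) (hj : m ≤ j) :
    ((wrd m a t).take j).toFinset = ((List.range m).map Nat.succ).toFinset := by
  rw [wrd, List.take_append, List.take_of_length_le (by simpa using hj),
    List.toFinset_append, List.take_replicate]
  rcases Nat.eq_zero_or_pos (min (j - ((List.range m).map Nat.succ).length) t) with h0 | h0
  · rw [h0]; simp
  · rw [List.toFinset_replicate_of_ne_zero (by omega)]
    apply Finset.union_eq_left.2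
    intro x hx
    rw [Finset.mem_singleton] at hx
    subst hx
    exact mem_range_succ_toFinset.2 ⟨ha, ham⟩

private lemma card_filter_gt (c m : ℕ) :
    (((List.range m).map Nat.succ).toFinset.filter (fun v => c < v)).card = m - c := by
  have : ((List.range m).map Nat.succ).toFinset.filter (fun v => c < v) = Finset.Ioc c m := by
    ext x
    simp only [Finset.mem_filter, Finset.mem_Ioc, mem_range_succ_toFinset]
    omega
  rw [this, Nat.card_Ioc]

private lemma foldr_max_eq (b : ℕ) (l : List ℕ) : l.foldr max b = max b (l.foldr max 0) := by
  induction l with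
  | nil => simp
  | cons x l ih =>
    simp only [List.foldr_cons, ih]
    exact max_left_comm x b _

private lemma foldr_max_range (m : ℕ) : ((List.range m).map Nat.succ).foldr max 0 = m := by
  induction m with
  | zero => simp
  | succ m ih =>
    have h1 : (List.map Nat.succ [m]).foldr max 0 = m + 1 := by simp
    rw [List.range_succ, List.map_append, List.foldr_append, h1, foldr_max_eq, ih]
    omega

private lemma statLB_wrd {m a t : ℕ} (ha : 1 ≤ a) (ham : a ≤ m) :
    statLB (wrd m a t) = t * (m - a) := by
  unfold statLB
  rw [wrd_length, Finset.sum_range_add]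
  have h1 : ∀ j ∈ Finset.range m,
      (((wrd m a t).take j).toFinset.filter (fun v => (wrd m a t).getD j 0 < v)).card = 0 := by
    intro j hj
    rw [Finset.mem_range] at hj
    rw [List.getD_eq_getElem _ _ (by rw [wrd_length]; omega),
      wrd_getElem_lt hj, wrd_take_le (le_of_lt hj), card_filter_gt]
    omega
  have h2 : ∀ j ∈ Finset.range t,
      (((wrd m a t).take (m + j)).toFinset.filter (fun v => (wrd m a t).getD (m + j) 0 < v)).card
        = m - a := by
    intro j hj
    rw [Finset.mem_range] at hj
    rw [List.getD_eq_getElem _ _ (by rw [wrd_length]; omega),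
      wrd_getElem_ge (Nat.le_add_right m j), wrd_take_toFinset ha ham (Nat.le_add_right m j),
      card_filter_gt]
  rw [Finset.sum_congr rfl h1, Finset.sum_congr rfl h2]
  simp [Finset.sum_const, mul_comm]

private lemma avoid_elim {w : List ℕ} (h : ¬ ContainsPat w [1, 1, 2]) {i j l : ℕ}
    (hij : i < j) (hjl : j < l) (hl : l < w.length)
    (heq : w[i]'(by omega) = w[j]'(by omega)) : w[l]'hl = w[i]'(by omega) := by
  by_contra hne
  apply h
  refine ⟨![⟨i, by omega⟩, ⟨j, by omega⟩, ⟨l, hl⟩], ?_, ?_⟩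
  · intro a b hab
    fin_cases a <;> fin_cases b <;>
      simp_all [Fin.lt_def, Matrix.cons_val_zero, Matrix.cons_val_one] <;> omega
  · intro a b
    fin_cases a <;> fin_cases b <;>
      simp_all [List.get_eq_getElem, Matrix.cons_val_zero, Matrix.cons_val_one] <;>
      first
        | rfl
        | (exact heq)
        | (exact heq.symm)
        | (intro hcontra; exact hne (by omega))
        | (constructor <;> omega)

private lemma le_foldr_max {l : List ℕ} {x : ℕ} (h : x ∈ l) : x ≤ l.foldr max 0 := by
  induction l with
  | nil => cases h
  | cons y l ih =>
    rcases List.mem_cons.1 h with rfl | h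
    · exact le_max_left _ _
    · exact le_trans (ih h) (le_max_right _ _)

private lemma wrd_mem_Rn {n m a t : ℕ} (ha : 1 ≤ a) (ham : a ≤ m) (hn : m + t = n) :
    wrd m a t ∈ Rn n [1, 1, 2] := by
  subst hn
  refine ⟨wrd_length m a t, ⟨?_, ?_, ?_⟩, ?_⟩
  · intro x hx
    simp only [wrd, List.mem_append, List.mem_map, List.mem_range, List.mem_replicate] at hx
    rcases hx with ⟨i, -, rfl⟩ | ⟨-, rfl⟩ <;> omega
  · intro h0
    rw [List.getD_eq_getElem _ _ (by omega), wrd_getElem_lt (by omega)]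
  · intro j hj
    rw [List.getD_eq_getElem _ _ hj]
    rw [wrd_length] at hj
    by_cases hjm : j + 1 < m
    · rw [wrd_getElem_lt hjm, wrd_take_le (by omega), foldr_max_range]
      omega
    · rw [wrd_getElem_ge (by omega) (by rw [wrd_length]; omega)]
      have hm1 : 1 ≤ m := le_trans ha ham
      have hlt : m - 1 < ((wrd m a t).take (j + 1)).length := by
        rw [List.length_take, wrd_length]; omega
      have hmem : m ∈ (wrd m a t).take (j + 1) := by
        have : ((wrd m a t).take (j + 1))[m - 1] = m := by
          rw [List.getElem_take, wrd_getElem_lt (by omega)]; omega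
        have h' := List.getElem_mem hlt
        rwa [this] at h'
      have := le_foldr_max hmem
      omega
  · rintro ⟨f, hmono, hiff⟩
    have h01 : ((1 : ℕ) : ℕ) = 1 := rfl
    have e01 : (wrd m a t).get (f ⟨0, by norm_num⟩) = (wrd m a t).get (f ⟨1, by norm_num⟩) :=
      (hiff ⟨0, by norm_num⟩ ⟨1, by norm_num⟩).2 rfl
    have e02 : ¬ ((wrd m a t).get (f ⟨0, by norm_num⟩) = (wrd m a t).get (f ⟨2, by norm_num⟩)) := by
      intro hcon
      have := (hiff ⟨0, by norm_num⟩ ⟨2, by norm_num⟩).1 hcon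
      simp [List.get] at this
    have m01 : f ⟨0, by norm_num⟩ < f ⟨1, by norm_num⟩ := hmono (by exact Fin.mk_lt_mk.2 (by norm_num))
    have m12 : f ⟨1, by norm_num⟩ < f ⟨2, by norm_num⟩ := hmono (by exact Fin.mk_lt_mk.2 (by norm_num))
    set i0 := f ⟨0, by norm_num⟩ with hi0
    set i1 := f ⟨1, by norm_num⟩ with hi1
    set i2 := f ⟨2, by norm_num⟩ with hi2
    simp only [List.get_eq_getElem] at e01 e02
    by_cases hc : (i1 : ℕ) < m
    · rw [wrd_getElem_lt (show (i0:ℕ) < m by omega), wrd_getElem_lt hc] at e01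
      omega
    · have hge1 : m ≤ (i1 : ℕ) := by omega
      have hge2 : m ≤ (i2 : ℕ) := by omega
      rw [wrd_getElem_ge hge1 i1.2] at e01
      rw [e01, wrd_getElem_ge hge2 i2.2] at e02
      exact e02 rfl

private lemma structure_lem {n k : ℕ} {w : List ℕ} (hw : w ∈ Rn n [1, 1, 2]) (hn3 : 3 ≤ n)
    (hlb : statLB w = k) (hk : 1 ≤ k) :
    ∃ m a, 1 ≤ a ∧ a ≤ m ∧ m < n ∧ w = wrd m a (n - m) ∧ (n - m) * (m - a) = k := by
  obtain ⟨hlen, ⟨hpos, hfirst, hgrow⟩, havoid⟩ := hw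
  by_cases hex : ∃ i, i < n ∧ w.getD i 0 ≠ i + 1
  · obtain ⟨m, hmn, hmne, hmin⟩ : ∃ m, m < n ∧ w.getD m 0 ≠ m + 1 ∧
        ∀ i < m, ¬(i < n ∧ w.getD i 0 ≠ i + 1) :=
      ⟨Nat.find hex, (Nat.find_spec hex).1, (Nat.find_spec hex).2,
        fun i hi => Nat.find_min hex hi⟩
    have hpref : ∀ i, i < m → ∀ (hh : i < w.length), w[i] = i + 1 := by
      intro i hi hh
      have h1 := hmin i hi
      push_neg at h1
      have h2 := h1 (by omega)
      rwa [List.getD_eq_getElem _ _ hh] at h2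
    have hm1 : 1 ≤ m := by
      rcases Nat.eq_zero_or_pos m with h0 | h0
      · exfalso
        apply hmne
        rw [h0]
        exact hfirst (by omega)
      · exact h0
    have htake : w.take m = (List.range m).map Nat.succ := by
      apply List.ext_getElem
      · rw [List.length_take, List.length_map, List.length_range]; omega
      · intro i h1 h2
        rw [List.length_take] at h1
        rw [List.getElem_take, List.getElem_map, List.getElem_range, hpref i (by omega) (by omega)]
    have hgm := hgrow (m - 1) (by omega : m - 1 + 1 < w.length)
    rw [show m - 1 + 1 = m by omega, htake, foldr_max_range,
      List.getD_eq_getElem _ _ (by omega : m < w.length)] at hgm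
    rw [List.getD_eq_getElem _ _ (by omega : m < w.length)] at hmne
    have hmw : m < w.length := by omega
    obtain ⟨a, haw⟩ : ∃ a, w[m]'hmw = a := ⟨_, rfl⟩
    rw [haw] at hgm hmne
    have ha1 : 1 ≤ a := haw ▸ hpos _ (List.getElem_mem hmw)
    have ham : a ≤ m := by omega
    have hrep : w[a-1]'(by omega) = a := by rw [hpref (a-1) (by omega) (by omega)]; omega
    have htail : ∀ l (hl : m < l) (hl2 : l < n), w[l]'(by omega) = a := by
      intro l hl hl2
      have := avoid_elim havoid (show a - 1 < m by omega) hl (by omega : l < w.length)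
        (by rw [hrep, haw])
      rw [this, hrep]
    have hweq : w = wrd m a (n - m) := by
      apply List.ext_getElem
      · rw [wrd_length, hlen]; omega
      · intro i h1 h2
        rw [hlen] at h1
        rcases lt_trichotomy i m with hc | hc | hc
        · rw [wrd_getElem_lt hc, hpref i hc (by omega)]
        · subst hc; rw [wrd_getElem_ge le_rfl, haw]
        · rw [wrd_getElem_ge (by omega), htail i hc h1]
    refine ⟨m, a, ha1, ham, hmn, hweq, ?_⟩
    rw [hweq, statLB_wrd ha1 ham] at hlb
    exact hlb
  · exfalso
    push_neg at hex
    have hweq : w = wrd n 1 0 := by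
      apply List.ext_getElem
      · rw [wrd_length, hlen]; omega
      · intro i h1 h2
        rw [hlen] at h1
        rw [wrd_getElem_lt (by omega), ← List.getD_eq_getElem w 0 (by omega), hex i h1]
    rw [hweq, statLB_wrd le_rfl (by omega)] at hlb
    omega

theorem stmt15' (n k : ℕ) (hk : 1 ≤ k) (hkn : k ≤ n - 2) :
    {d : ℕ | 1 ≤ d ∧ d ∣ k ∧ d + k / d + 1 ≤ n}.ncard = k.divisors.card ∧
    {w ∈ Rn n [1, 1, 2] | statLB w = k}.ncard = k.divisors.card := by
  have hn : k + 2 ≤ n := by omega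
  have part1 : {d : ℕ | 1 ≤ d ∧ d ∣ k ∧ d + k / d + 1 ≤ n} = (↑k.divisors : Set ℕ) := by
    ext d
    simp only [Set.mem_setOf_eq, Finset.coe_sort_coe, Finset.mem_coe, Nat.mem_divisors]
    constructor
    · rintro ⟨h1, h2, h3⟩; exact ⟨h2, by omega⟩
    · rintro ⟨hdvd, -⟩
      have hd1 : 1 ≤ d := Nat.pos_of_dvd_of_pos hdvd (by omega)
      have he : d * (k / d) = k := Nat.mul_div_cancel' hdvd
      have he1 : 1 ≤ k / d := (Nat.one_le_div_iff hd1).2 (Nat.le_of_dvd (by omega) hdvd)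
      refine ⟨hd1, hdvd, ?_⟩
      set e := k / d with hedef
      obtain ⟨d', rfl⟩ : ∃ x, d = x + 1 := ⟨d - 1, by omega⟩
      obtain ⟨e', he'⟩ : ∃ y, e = y + 1 := ⟨e - 1, by omega⟩
      have hk' : k = d' * e' + d' + e' + 1 := by rw [← he, he']; ring
      generalize d' * e' = z at hk'
      omega
  have hdiv : ∀ d ∈ k.divisors, 1 ≤ d ∧ d ∣ k ∧ d + k / d + 1 ≤ n := by
    intro d hd
    have hd' : d ∈ (↑k.divisors : Set ℕ) := hd
    rw [← part1] at hd'
    exact hd'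
  constructor
  · rw [part1, Set.ncard_coe_finset]
  · have hset : {w ∈ Rn n [1, 1, 2] | statLB w = k} =
        (fun d => wrd (n - d) (n - d - k / d) d) '' (↑k.divisors : Set ℕ) := by
      ext w
      simp only [Set.mem_setOf_eq, Set.mem_image, Finset.mem_coe]
      constructor
      · rintro ⟨hwRn, hwlb⟩
        obtain ⟨m, a, ha1, ham, hmn, hweq, hprod⟩ := structure_lem hwRn (by omega) hwlb hk
        refine ⟨n - m, ?_, ?_⟩
        · exact Nat.mem_divisors.2 ⟨⟨m - a, hprod.symm⟩, by omega⟩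
        · have hd1 : 1 ≤ n - m := by
            rcases Nat.eq_zero_or_pos (n - m) with h0 | h0
            · rw [h0] at hprod; omega
            · exact h0
          have hkd : k / (n - m) = m - a := by
            rw [← hprod, Nat.mul_div_cancel_left _ (by omega)]
          rw [hkd, hweq]
          congr 1 <;> omega
      · rintro ⟨d, hd, rfl⟩
        obtain ⟨hd1, hdvd, hle⟩ := hdiv d hd
        have he : d * (k / d) = k := Nat.mul_div_cancel' hdvd
        have he1 : 1 ≤ k / d := (Nat.one_le_div_iff hd1).2 (Nat.le_of_dvd (by omega) hdvd)
        have ha1 : 1 ≤ n - d - k / d := by omega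
        have ham : n - d - k / d ≤ n - d := by omega
        refine ⟨wrd_mem_Rn ha1 ham (by omega), ?_⟩
        rw [statLB_wrd ha1 ham, show n - d - (n - d - k / d) = k / d by omega, he]
    rw [hset, Set.ncard_image_of_injOn, Set.ncard_coe_finset]
    intro d1 h1 d2 h2 heq
    by_contra hne
    rw [Finset.mem_coe] at h1 h2
    obtain ⟨hd11, hdvd1, hle1⟩ := hdiv d1 h1
    obtain ⟨hd21, hdvd2, hle2⟩ := hdiv d2 h2
    have he11 : 1 ≤ k / d1 := (Nat.one_le_div_iff hd11).2 (Nat.le_of_dvd (by omega) hdvd1)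
    have he21 : 1 ≤ k / d2 := (Nat.one_le_div_iff hd21).2 (Nat.le_of_dvd (by omega) hdvd2)
    -- wlog d1 < d2
    have key : ∀ a b : ℕ, a ∈ k.divisors → b ∈ k.divisors → a < b →
        wrd (n - a) (n - a - k / a) a ≠ wrd (n - b) (n - b - k / b) b := by
      intro a b ha hb hab hEq
      obtain ⟨ha1, hadvd, hale⟩ := hdiv a ha
      obtain ⟨hb1, hbdvd, hble⟩ := hdiv b hb
      have hbe1 : 1 ≤ k / b := (Nat.one_le_div_iff hb1).2 (Nat.le_of_dvd (by omega) hbdvd)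
      have hi : n - b < (wrd (n - a) (n - a - k / a) a).length := by
        rw [wrd_length]; omega
      have hi2 : n - b < (wrd (n - b) (n - b - k / b) b).length := by
        rw [wrd_length]; omega
      have hv1 : (wrd (n - a) (n - a - k / a) a)[n - b]'hi = n - b + 1 :=
        wrd_getElem_lt (by omega) hi
      have hv2 : (wrd (n - b) (n - b - k / b) b)[n - b]'hi2 = n - b - k / b :=
        wrd_getElem_ge le_rfl hi2
      have : (wrd (n - a) (n - a - k / a) a)[n - b]'hi
          = (wrd (n - b) (n - b - k / b) b)[n - b]'hi2 := by
        simp only [hEq]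
      rw [hv1, hv2] at this
      omega
    rcases lt_trichotomy d1 d2 with hc | hc | hc
    · exact key d1 d2 h1 h2 hc heq
    · exact hne hc
    · exact key d2 d1 h2 h1 hc heq.symm

/-- for `1 ≤ k ≤ n-2`, `D_k = τ(k)`, the number of divisors of
`k`; consequently the number of `σ ∈ Π_n(12/3)` with `lb(w(σ)) = k` is
`τ(k)`. -/
theorem stmt15 (n k : ℕ) (hk : 1 ≤ k) (hkn : k ≤ n - 2) :
    {d : ℕ | 1 ≤ d ∧ d ∣ k ∧ d + k / d + 1 ≤ n}.ncard = k.divisors.card ∧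
    {w ∈ Rn n [1, 1, 2] | statLB w = k}.ncard = k.divisors.card :=
  stmt15' n k hk hkn
end
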